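/- Let a, b > 0 be real numbers and set m' = min(4b⁴/a², 4a²). With ν_{k,j} and μ_{k,j}^± as before, restricted to even weights: (i) ν_{k,j} ≥ m' for all even integers k ≥ 2 and 0 ≤ j ≤ k; (ii) (k+2)²a² ≥ m' and k²a² + 4kb² + 4b⁴/a² ≥ m' for all even integers k ≥ 0; (iii) μ_{k,j}^± ≥ m' for all even integers k ≥ 2 and 1 ≤ j ≤ k−1; and m' is attained at k = 0 (where the values 4b⁴/a² and 4a² occur). Consequently, the smallest eigenvalue of the Hodge-Laplacian on 1-forms of the projective space (SO(3), g_{(a,b,b)}), whose spectrum consists of the eigenvalues of even weight k, equals min(4b⁴/a², 4a²). -/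
import Mathlib


/-- `ν_{k,j} = a²(k−2j)² + b²((4j+2)k − 4j²)`. -/
noncomputable def nuB (a b : ℝ) (k j : ℕ) : ℝ :=
  a^2 * ((k:ℝ) - 2*(j:ℝ))^2 + b^2 * ((4*(j:ℝ) + 2)*(k:ℝ) - 4*(j:ℝ)^2)

/-- `μ_{k,j}^± = ν_{k,j} + 2b⁴/a² ± 2(b²/a²)√(a²ν_{k,j} + b⁴)` (`ε = ±1`). -/
noncomputable def muB (a b : ℝ) (k j : ℕ) (ε : ℝ) : ℝ :=
  nuB a b k j + 2*b^4/a^2 + ε * 2 * (b^2/a^2) * Real.sqrt (a^2 * nuB a b k j + b^4)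

lemma nuB_nonneg (a b : ℝ) (hb : 0 < b) (k j : ℕ) (hj : j ≤ k) : 0 ≤ nuB a b k j := by
  have hj' : (j:ℝ) ≤ k := by exact_mod_cast hj
  have h0 : (0:ℝ) ≤ j := Nat.cast_nonneg j
  have hkk : (0:ℝ) ≤ k := Nat.cast_nonneg k
  unfold nuB
  nlinarith [mul_nonneg (sq_nonneg a) (sq_nonneg ((k:ℝ) - 2*j)),
    mul_nonneg (sq_nonneg b) (mul_nonneg h0 (sub_nonneg.2 hj')),
    mul_nonneg (sq_nonneg b) hkk]

lemma min_le_4b2 (a b : ℝ) (ha : 0 < a) (hb : 0 < b) :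
    min (4*b^4/a^2) (4*a^2) ≤ 4*b^2 := by
  rcases le_total (b^2) (a^2) with h | h
  · refine le_trans (min_le_left _ _) ?_
    rw [div_le_iff₀ (by positivity)]
    nlinarith [sq_nonneg b]
  · exact le_trans (min_le_right _ _) (by nlinarith)

lemma nuB_ge_min (a b : ℝ) (ha : 0 < a) (hb : 0 < b) (k j : ℕ)
    (hk : Even k) (hk2 : 2 ≤ k) (hj : j ≤ k) :
    min (4*b^4/a^2) (4*a^2) ≤ nuB a b k j := by
  have hj' : (j:ℝ) ≤ k := by exact_mod_cast hj
  have h0 : (0:ℝ) ≤ j := Nat.cast_nonneg j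
  by_cases h : k = 2*j
  · have hj1 : 1 ≤ j := by omega
    have hj1' : (1:ℝ) ≤ j := by exact_mod_cast hj1
    have hm := min_le_4b2 a b ha hb
    subst h
    unfold nuB
    push_cast
    nlinarith [sq_nonneg b]
  · -- k - 2j is a nonzero even integer, so its square is ≥ 4
    obtain ⟨m, hm⟩ := hk
    have hsq : (4:ℝ) ≤ ((k:ℝ) - 2*j)^2 := by
      have hd : ((k:ℝ) - 2*j) = ((k:ℤ) - 2*j : ℤ) := by push_cast; ring
      have hz : ((k:ℤ) - 2*j) ≠ 0 := by omega
      have hev : (2:ℤ) ∣ ((k:ℤ) - 2*j) := by omega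
      obtain ⟨e, he⟩ := hev
      have he0 : e ≠ 0 := by omega
      have : (1:ℤ) ≤ e^2 := by nlinarith [sq_nonneg e, Int.one_le_abs he0, sq_abs e]
      have h4 : (4:ℤ) ≤ ((k:ℤ) - 2*j)^2 := by rw [he]; nlinarith
      rw [hd]
      exact_mod_cast (by exact_mod_cast h4 : ((4:ℤ):ℝ) ≤ ((((k:ℤ) - 2*j)^2 : ℤ):ℝ))
    have hcoef : (0:ℝ) ≤ (4*(j:ℝ) + 2)*(k:ℝ) - 4*(j:ℝ)^2 := by nlinarith
    refine le_trans (min_le_right _ _) ?_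
    unfold nuB
    nlinarith [sq_nonneg b]

lemma nuB_ge_8b2 (a b : ℝ) (ha : 0 < a) (hb : 0 < b) (k j : ℕ)
    (hk2 : 2 ≤ k) (hj1 : 1 ≤ j) (hjk : j ≤ k - 1) :
    8*b^2 ≤ nuB a b k j := by
  have hjk' : j + 1 ≤ k := by omega
  have h1 : (1:ℝ) ≤ j := by exact_mod_cast hj1
  have h2 : (j:ℝ) + 1 ≤ k := by exact_mod_cast hjk'
  have h3 : (2:ℝ) ≤ k := by exact_mod_cast hk2
  unfold nuB
  nlinarith [sq_nonneg ((k:ℝ) - 2*j), sq_nonneg a, mul_nonneg (sub_nonneg.2 h1) (by linarith : (0:ℝ) ≤ (k:ℝ) - (j:ℝ) - 1)]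

lemma muB_plus_ge (a b : ℝ) (ha : 0 < a) (hb : 0 < b) (k j : ℕ)
    (hk : Even k) (hk2 : 2 ≤ k) (hj1 : 1 ≤ j) (hjk : j ≤ k - 1) :
    min (4*b^4/a^2) (4*a^2) ≤ muB a b k j 1 := by
  have hj : j ≤ k := by omega
  have h := nuB_ge_min a b ha hb k j hk hk2 hj
  have h1 : (0:ℝ) ≤ 2*b^4/a^2 := by positivity
  have h2 : (0:ℝ) ≤ (1:ℝ) * 2 * (b^2/a^2) * Real.sqrt (a^2 * nuB a b k j + b^4) := by
    have := Real.sqrt_nonneg (a^2 * nuB a b k j + b^4)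
    positivity
  unfold muB
  linarith

lemma muB_minus_ge (a b : ℝ) (ha : 0 < a) (hb : 0 < b) (k j : ℕ)
    (hk : Even k) (hk2 : 2 ≤ k) (hj1 : 1 ≤ j) (hjk : j ≤ k - 1) :
    min (4*b^4/a^2) (4*a^2) ≤ muB a b k j (-1) := by
  set ν := nuB a b k j with hν
  have hν8 : 8*b^2 ≤ ν := nuB_ge_8b2 a b ha hb k j hk2 hj1 hjk
  have hν0 : 0 ≤ ν := by nlinarith
  have hin : (0:ℝ) ≤ a^2 * ν + b^4 := by positivity
  set s := Real.sqrt (a^2 * ν + b^4) with hs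
  have hs0 : 0 ≤ s := Real.sqrt_nonneg _
  have hs2 : s^2 = a^2 * ν + b^4 := Real.sq_sqrt hin
  set c := min (2*b^2) (2*a^2) with hc
  have hc1 : c ≤ 2*b^2 := min_le_left _ _
  have hc2 : c ≤ 2*a^2 := min_le_right _ _
  have hc0 : (0:ℝ) ≤ c := le_min (by positivity) (by positivity)
  have hkey : (b^2 + c)^2 ≤ a^2 * ν + b^4 := by
    have hmul : a^2 * (8*b^2) ≤ a^2 * ν := by nlinarith
    nlinarith [mul_le_mul hc1 hc2 hc0 (by positivity : (0:ℝ) ≤ 2*b^2),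
      mul_le_mul_of_nonneg_left hc2 (by positivity : (0:ℝ) ≤ 2*b^2)]
  have hsc : b^2 + c ≤ s := by
    nlinarith [sq_nonneg (s + (b^2 + c)), sq_nonneg (s - (b^2 + c))]
  have hval : muB a b k j (-1) = (s - b^2)^2 / a^2 := by
    have hex : (s - b^2)^2 = a^2 * ν + 2*b^4 - 2*b^2*s := by
      have : (s - b^2)^2 = s^2 - 2*b^2*s + b^4 := by ring
      rw [this, hs2]; ring
    unfold muB
    rw [← hν, ← hs, hex]
    field_simp
    ring
  have hcsq : min (4*b^4/a^2) (4*a^2) * a^2 ≤ c^2 := by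
    rcases le_total (2*b^2) (2*a^2) with h | h
    · have hceq : c = 2*b^2 := min_eq_left h
      rw [hceq]
      calc min (4*b^4/a^2) (4*a^2) * a^2 ≤ (4*b^4/a^2)*a^2 :=
            mul_le_mul_of_nonneg_right (min_le_left _ _) (by positivity)
        _ = (2*b^2)^2 := by field_simp; ring
    · have hceq : c = 2*a^2 := min_eq_right h
      rw [hceq]
      calc min (4*b^4/a^2) (4*a^2) * a^2 ≤ (4*a^2)*a^2 :=
            mul_le_mul_of_nonneg_right (min_le_right _ _) (by positivity)
        _ = (2*a^2)^2 := by ring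
  rw [hval, le_div_iff₀ (by positivity : (0:ℝ) < a^2)]
  nlinarith [mul_self_le_mul_self hc0 (by linarith : c ≤ s - b^2)]

/-- The spectrum of the Hodge-Laplacian `Δ₁` on 1-forms of `(SO(3), g_{(a,b,b)})`: the
subset of the Berger-sphere spectrum consisting of the eigenvalues with even weight `k`:
the numbers `ν_{k,j}` (`k ≥ 2` even, `0 ≤ j ≤ k`), `(k+2)²a²` and `k²a² + 4kb² + 4b⁴/a²`
(`k ≥ 0` even), and `μ_{k,j}^±` (`k ≥ 2` even, `1 ≤ j ≤ k−1`). -/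
def SO3Spectrum (a b : ℝ) : Set ℝ :=
  {x | ∃ k : ℕ, Even k ∧ 2 ≤ k ∧ ∃ j : ℕ, j ≤ k ∧ x = nuB a b k j}
  ∪ {x | ∃ k : ℕ, Even k ∧ x = ((k:ℝ) + 2)^2 * a^2}
  ∪ {x | ∃ k : ℕ, Even k ∧ x = (k:ℝ)^2*a^2 + 4*(k:ℝ)*b^2 + 4*b^4/a^2}
  ∪ {x | ∃ k : ℕ, Even k ∧ 2 ≤ k ∧ ∃ j : ℕ, 1 ≤ j ∧ j ≤ k - 1 ∧
      (x = muB a b k j 1 ∨ x = muB a b k j (-1))}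

/-- with `m' = min(4b⁴/a², 4a²)`, all even-weight Berger eigenvalues are
`≥ m'`, `m'` is attained at `k = 0` (where the values `4b⁴/a²` and `4a²` occur), and
consequently the smallest eigenvalue of the Hodge-Laplacian on 1-forms of the projective
space `(SO(3), g_{(a,b,b)})` equals `min(4b⁴/a², 4a²)`. -/
theorem so3_first_eigenvalue (a b : ℝ) (ha : 0 < a) (hb : 0 < b) :
    (∀ k : ℕ, Even k → 2 ≤ k → ∀ j : ℕ, j ≤ k →
      min (4*b^4/a^2) (4*a^2) ≤ nuB a b k j)
    ∧ (∀ k : ℕ, Even k → min (4*b^4/a^2) (4*a^2) ≤ ((k:ℝ) + 2)^2 * a^2)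
    ∧ (∀ k : ℕ, Even k →
        min (4*b^4/a^2) (4*a^2) ≤ (k:ℝ)^2*a^2 + 4*(k:ℝ)*b^2 + 4*b^4/a^2)
    ∧ (∀ k : ℕ, Even k → 2 ≤ k → ∀ j : ℕ, 1 ≤ j → j ≤ k - 1 →
        min (4*b^4/a^2) (4*a^2) ≤ muB a b k j 1
        ∧ min (4*b^4/a^2) (4*a^2) ≤ muB a b k j (-1))
    ∧ ((0:ℕ):ℝ)^2*a^2 + 4*((0:ℕ):ℝ)*b^2 + 4*b^4/a^2 = 4*b^4/a^2
    ∧ (((0:ℕ):ℝ) + 2)^2 * a^2 = 4*a^2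
    ∧ IsLeast (SO3Spectrum a b) (min (4*b^4/a^2) (4*a^2)) := by
  constructor
  · exact fun k hk hk2 j hj => nuB_ge_min a b ha hb k j hk hk2 hj
  refine ⟨?_, ?_, ?_, by push_cast; ring, by push_cast; ring, ?_, ?_⟩
  · intro k _
    have hk0 : (0:ℝ) ≤ k := Nat.cast_nonneg k
    refine le_trans (min_le_right _ _) ?_
    nlinarith [mul_nonneg hk0 (sq_nonneg a), mul_nonneg (mul_nonneg hk0 hk0) (sq_nonneg a)]
  · intro k _
    have hk0 : (0:ℝ) ≤ k := Nat.cast_nonneg k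
    refine le_trans (min_le_left _ _) ?_
    nlinarith [sq_nonneg a, sq_nonneg b, sq_nonneg ((k:ℝ)*a), mul_nonneg hk0 (sq_nonneg b)]
  · exact fun k hk hk2 j hj1 hjk =>
      ⟨muB_plus_ge a b ha hb k j hk hk2 hj1 hjk, muB_minus_ge a b ha hb k j hk hk2 hj1 hjk⟩
  · -- membership
    rcases le_total (4*b^4/a^2) (4*a^2) with h | h
    · refine Or.inl (Or.inr ⟨0, Even.zero, ?_⟩)
      rw [min_eq_left h]; push_cast; ring
    · refine Or.inl (Or.inl (Or.inr ⟨0, Even.zero, ?_⟩))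
      rw [min_eq_right h]; push_cast; ring
  · -- lower bound
    rintro x (((⟨k, hk, hk2, j, hj, rfl⟩ | ⟨k, hk, rfl⟩) | ⟨k, hk, rfl⟩) |
      ⟨k, hk, hk2, j, hj1, hjk, (rfl | rfl)⟩)
    · exact nuB_ge_min a b ha hb k j hk hk2 hj
    · have hk0 : (0:ℝ) ≤ k := Nat.cast_nonneg k
      refine le_trans (min_le_right _ _) ?_
      nlinarith [mul_nonneg hk0 (sq_nonneg a), mul_nonneg (mul_nonneg hk0 hk0) (sq_nonneg a)]
    · have hk0 : (0:ℝ) ≤ k := Nat.cast_nonneg k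
      refine le_trans (min_le_left _ _) ?_
      nlinarith [sq_nonneg a, sq_nonneg b, sq_nonneg ((k:ℝ)*a), mul_nonneg hk0 (sq_nonneg b)]
    · exact muB_plus_ge a b ha hb k j hk hk2 hj1 hjk
    · exact muB_minus_ge a b ha hb k j hk hk2 hj1 hjk
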